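/- arXiv:math/0507438 — 2 statements merged into one kernel-verified Lean document; each statement's English description precedes it below -/
import Mathlib

section
/- Let r : H → H be a choice of coset representatives for G\H, i.e. r is constant on each right coset Gh, r(h) ∈ Gh (equivalently h·r(h)⁻¹ ∈ G) for all h, and r(1_H) = 1_H. For u ∈ Z¹(G,N) define ũ : H → (H → N) by ũ_h(h′) := (h′·r(h′)⁻¹) • u( (r(h′)·h) · r(r(h′)·h)⁻¹ ). Then: (a) for each h ∈ H the map ũ_h is G-covariant, i.e. ũ_h ∈ N_H; (b) ũ is a 1-cocycle in Z¹(H, N_H); (c) ũ_g(1_H) = u(g) for all g ∈ G. -/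
/-!
Write `h = σ h * r h` with `σ h ∈ G`. Since `r` is constant on right cosets, `r (r x * y) = r (x * y)`,
and hence `σ (x * y) = σ x * σ (r x * y)`: the factor `σ` itself satisfies a cocycle-type
identity. In `ũ_h h' = σ h' • u (σ (r h' * h))`, this identity (applied twice) together with the
cocycle identity of `u` gives `ũ_{h₁ h₂} h' = ũ_{h₁} h' * ũ_{h₂} (h' * h₁)`, which is the
cocycle identity in `N_H`; covariance follows from `σ (g * h) = g * σ h`.
-/


/-- A 1-cocycle of `G` in a (possibly noncommutative) group `N` on which `G`
acts on the left by group automorphisms: `u (g₁ * g₂) = u g₁ * g₁ • u g₂`. -/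
def IsCocycle {G N : Type*} [Group G] [Group N] [MulDistribMulAction G N]
    (u : G → N) : Prop :=
  ∀ g₁ g₂ : G, u (g₁ * g₂) = u g₁ * g₁ • u g₂

/-- Two maps `u v : G → N` are cohomologous if there is `n : N` with
`v g = n⁻¹ * u g * g • n` for all `g`. -/
def Cohomologous {G N : Type*} [Group G] [Group N] [MulDistribMulAction G N]
    (u v : G → N) : Prop :=
  ∃ n : N, ∀ g : G, v g = n⁻¹ * u g * g • n

/-- The induced `H`-group `N_H` of `G`-covariant maps `φ : H → N`
(those with `φ (g * h) = g • φ h`), as a subgroup of the group of all maps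
`H → N` with pointwise multiplication. -/
def NHgroup {H : Type*} [Group H] (G : Subgroup H) (N : Type*) [Group N]
    [MulDistribMulAction G N] : Subgroup (H → N) where
  carrier := {φ | ∀ (g : G) (h : H), φ ((g : H) * h) = g • φ h}
  mul_mem' := by
    intro a b ha hb g h
    simp only [Pi.mul_apply, ha g h, hb g h, smul_mul']
  one_mem' := by
    intro g h
    simp
  inv_mem' := by
    intro a ha g h
    simp only [Pi.inv_apply, ha g h, smul_inv']

/-- The left action of `H` on `N_H`, given by `(h • φ) h' = φ (h' * h)`; it is an
action by group automorphisms. -/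
instance NHaction {H : Type*} [Group H] (G : Subgroup H) (N : Type*) [Group N]
    [MulDistribMulAction G N] : MulDistribMulAction H ↥(NHgroup G N) where
  smul h φ := ⟨fun h' => (φ : H → N) (h' * h), fun g h' => by
    show (φ : H → N) ((g : H) * h' * h) = g • (φ : H → N) (h' * h)
    rw [mul_assoc]; exact φ.2 g (h' * h)⟩
  one_smul φ := by
    ext h'
    show (φ : H → N) (h' * 1) = (φ : H → N) h'
    rw [mul_one]
  mul_smul h₁ h₂ φ := by
    ext h'
    show (φ : H → N) (h' * (h₁ * h₂)) = (φ : H → N) (h' * h₁ * h₂)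
    rw [mul_assoc]
  smul_mul h φ ψ := by
    ext h'
    rfl
  smul_one h := by
    ext h'
    rfl

section Transversal

variable {H : Type*} [Group H] {G : Subgroup H} {r : H → H}

/-- The `G`-component of `h` in the factorization `h = transversalFactor hr_mem h * r h`. -/
def transversalFactor (hr_mem : ∀ h : H, h * (r h)⁻¹ ∈ G) (h : H) : G :=
  ⟨h * (r h)⁻¹, hr_mem h⟩

theorem coe_transversalFactor (hr_mem : ∀ h : H, h * (r h)⁻¹ ∈ G) (h : H) :
    (transversalFactor hr_mem h : H) = h * (r h)⁻¹ :=
  rfl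

theorem rep_mul_left_of_mem (hr_const : ∀ h h' : H, h' * h⁻¹ ∈ G → r h' = r h)
    (g : G) (h : H) : r ((g : H) * h) = r h :=
  hr_const h _ (by simp)

theorem rep_rep_mul (hr_const : ∀ h h' : H, h' * h⁻¹ ∈ G → r h' = r h)
    (hr_mem : ∀ h : H, h * (r h)⁻¹ ∈ G) (x y : H) : r (r x * y) = r (x * y) :=
  hr_const _ _ <| by
    rw [show r x * y * (x * y)⁻¹ = (x * (r x)⁻¹)⁻¹ by group]
    exact G.inv_mem (hr_mem x)

theorem transversalFactor_mul (hr_const : ∀ h h' : H, h' * h⁻¹ ∈ G → r h' = r h)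
    (hr_mem : ∀ h : H, h * (r h)⁻¹ ∈ G) (x y : H) :
    transversalFactor hr_mem (x * y) =
      transversalFactor hr_mem x * transversalFactor hr_mem (r x * y) := by
  ext
  simp only [Subgroup.coe_mul, coe_transversalFactor, rep_rep_mul hr_const hr_mem]
  group

theorem transversalFactor_mul_left (hr_const : ∀ h h' : H, h' * h⁻¹ ∈ G → r h' = r h)
    (hr_mem : ∀ h : H, h * (r h)⁻¹ ∈ G) (g : G) (h : H) :
    transversalFactor hr_mem ((g : H) * h) = g * transversalFactor hr_mem h := by
  ext
  simp only [Subgroup.coe_mul, coe_transversalFactor, rep_mul_left_of_mem hr_const, mul_assoc]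

theorem transversalFactor_of_mem (hr_const : ∀ h h' : H, h' * h⁻¹ ∈ G → r h' = r h)
    (hr_mem : ∀ h : H, h * (r h)⁻¹ ∈ G) (hr_one : r 1 = 1) (g : G) :
    transversalFactor hr_mem (g : H) = g := by
  have hr_g : r (g : H) = 1 := by
    simpa [hr_one] using rep_mul_left_of_mem hr_const g 1
  ext
  simp [coe_transversalFactor, hr_g]

end Transversal

section Induced

variable {H : Type*} [Group H] {G : Subgroup H} {N : Type*} [Group N]
  [MulDistribMulAction G N] {r : H → H}

/-- `inducedCocycle hr_mem u h` is the map `ũ_h` of the paper. -/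
def inducedCocycle (hr_mem : ∀ h : H, h * (r h)⁻¹ ∈ G) (u : G → N) (h : H) : H → N :=
  fun h' => transversalFactor hr_mem h' • u (transversalFactor hr_mem (r h' * h))

theorem inducedCocycle_mem (hr_const : ∀ h h' : H, h' * h⁻¹ ∈ G → r h' = r h)
    (hr_mem : ∀ h : H, h * (r h)⁻¹ ∈ G) (u : G → N) (h : H) :
    inducedCocycle hr_mem u h ∈ NHgroup G N := by
  intro g h'
  simp only [inducedCocycle, transversalFactor_mul_left hr_const hr_mem,
    rep_mul_left_of_mem hr_const, mul_smul]

theorem inducedCocycle_mul (hr_const : ∀ h h' : H, h' * h⁻¹ ∈ G → r h' = r h)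
    (hr_mem : ∀ h : H, h * (r h)⁻¹ ∈ G) {u : G → N} (hu : IsCocycle u) (h₁ h₂ h' : H) :
    inducedCocycle hr_mem u (h₁ * h₂) h' =
      inducedCocycle hr_mem u h₁ h' * inducedCocycle hr_mem u h₂ (h' * h₁) := by
  simp only [inducedCocycle]
  rw [← mul_assoc, transversalFactor_mul hr_const hr_mem (r h' * h₁), hu, smul_mul',
    transversalFactor_mul hr_const hr_mem h', mul_smul, rep_rep_mul hr_const hr_mem]

theorem inducedCocycle_apply_one (hr_const : ∀ h h' : H, h' * h⁻¹ ∈ G → r h' = r h)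
    (hr_mem : ∀ h : H, h * (r h)⁻¹ ∈ G) (hr_one : r 1 = 1) (u : G → N) (g : G) :
    inducedCocycle hr_mem u g 1 = u g := by
  rw [inducedCocycle, hr_one, one_mul, transversalFactor_of_mem hr_const hr_mem hr_one,
    ← Subgroup.coe_one, transversalFactor_of_mem hr_const hr_mem hr_one, one_smul]

def inducedCocycleNH (hr_const : ∀ h h' : H, h' * h⁻¹ ∈ G → r h' = r h)
    (hr_mem : ∀ h : H, h * (r h)⁻¹ ∈ G) (u : G → N) (h : H) : NHgroup G N :=
  ⟨inducedCocycle hr_mem u h, inducedCocycle_mem hr_const hr_mem u h⟩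

theorem isCocycle_inducedCocycleNH (hr_const : ∀ h h' : H, h' * h⁻¹ ∈ G → r h' = r h)
    (hr_mem : ∀ h : H, h * (r h)⁻¹ ∈ G) {u : G → N} (hu : IsCocycle u) :
    IsCocycle (inducedCocycleNH hr_const hr_mem u) := fun h₁ h₂ =>
  Subtype.ext <| funext <| inducedCocycle_mul hr_const hr_mem hu h₁ h₂

end Induced

theorem tilde_is_covariant_cocycle {H : Type*} [Group H] (G : Subgroup H)
    {N : Type*} [Group N] [MulDistribMulAction G N]
    (r : H → H)
    (hr_const : ∀ h h' : H, h' * h⁻¹ ∈ G → r h' = r h)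
    (hr_mem : ∀ h : H, h * (r h)⁻¹ ∈ G)
    (hr_one : r 1 = 1)
    (u : G → N) (hu : IsCocycle u)
    (ut : H → H → N)
    (hut : ∀ h h' : H, ut h h' =
      (⟨h' * (r h')⁻¹, hr_mem h'⟩ : G) •
        u ⟨(r h' * h) * (r (r h' * h))⁻¹, hr_mem (r h' * h)⟩) :
    (∀ h : H, ut h ∈ NHgroup G N) ∧
    ∃ w : H → ↥(NHgroup G N),
      (∀ h : H, (w h : H → N) = ut h) ∧
      IsCocycle w ∧
      ∀ g : G, (w (g : H) : H → N) 1 = u g := by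
  obtain rfl : ut = inducedCocycle hr_mem u := funext fun h => funext (hut h)
  exact ⟨inducedCocycle_mem hr_const hr_mem u, inducedCocycleNH hr_const hr_mem u,
    fun _ => rfl, isCocycle_inducedCocycleNH hr_const hr_mem hu,
    inducedCocycle_apply_one hr_const hr_mem hr_one u⟩
end

section
/- Assume N is commutative and the cubing map n ↦ n³ is a bijection of N onto itself. Then every 1-cocycle u ∈ Z¹(PSL(2,ℤ), N) is cohomologous to a cocycle v with v(τ) = 1; in fact, writing m^{1/3} for the unique cube root of m and Y = u(τ), the element n = (Y²)^{1/3}·(τ•Y)^{1/3} satisfies n⁻¹·Y·(τ•n) = 1. -/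
/-- The group `SL(2,ℤ)`. -/
abbrev SL2Z := Matrix.SpecialLinearGroup (Fin 2) ℤ

/-- The group `PSL(2,ℤ)`, the quotient of `SL(2,ℤ)` by its center `{±1}`. -/
abbrev PSL2Z := SL2Z ⧸ Subgroup.center SL2Z

/-- The image `σ` of the matrix `((0,-1),(1,0))` in `PSL(2,ℤ)`. -/
def pslSigma : PSL2Z :=
  QuotientGroup.mk ⟨!![0, -1; 1, 0], by norm_num [Matrix.det_fin_two_of]⟩

/-- The image `τ` of the matrix `((0,-1),(1,-1))` in `PSL(2,ℤ)`. -/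
def pslTau : PSL2Z :=
  QuotientGroup.mk ⟨!![0, -1; 1, -1], by norm_num [Matrix.det_fin_two_of]⟩
/-!
Since `τ³ = 1`, the cocycle relation applied to `τ · τ²` gives `Y · τY · τ²Y = u(τ³) = 1`
for `Y = u(τ)`. If `n³ = Y² · τY`, then, `N` being commutative,
`(n⁻¹ Y (τ•n))³ = (Y² τY)⁻¹ · Y³ · (τY)² τ²Y = Y · τY · τ²Y = 1`, and cubing is injective.
Twisting `u` by such an `n` gives the required cohomologous cocycle.
-/

namespace IsCocycle

variable {G N : Type*} [Group G] [Group N] [MulDistribMulAction G N] {u : G → N}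

theorem map_one (hu : IsCocycle u) : u 1 = 1 := by
  simpa using hu 1 1

theorem mul_smul_mul_smul_smul_eq_one (hu : IsCocycle u) {g : G} (hg : g ^ 3 = 1) :
    u g * g • u g * g • g • u g = 1 := by
  have h := hu g (g * g)
  rw [← pow_three, hg, hu.map_one, hu g g, smul_mul'] at h
  rw [mul_assoc, h]

theorem twist (hu : IsCocycle u) (n : N) : IsCocycle fun g => n⁻¹ * u g * g • n := by
  intro g₁ g₂
  simp only [hu g₁ g₂, smul_mul', smul_inv', mul_smul]
  group

end IsCocycle

theorem pow_three_inv_mul_mul_smul {G N : Type*} [Monoid G] [CommGroup N]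
    [MulDistribMulAction G N] (g : G) {x n : N} (hn : n ^ 3 = x ^ 2 * g • x) :
    (n⁻¹ * x * g • n) ^ 3 = x * g • x * g • g • x := by
  rw [mul_pow, mul_pow, inv_pow, ← smul_pow', hn, smul_mul', smul_pow', mul_assoc,
    inv_mul_eq_iff_eq_mul]
  simp only [pow_succ, pow_zero, one_mul]
  ac_rfl

theorem IsCocycle.inv_mul_mul_smul_eq_one {G N : Type*} [Group G] [CommGroup N]
    [MulDistribMulAction G N] (hcube : Function.Injective fun n : N => n ^ 3) {u : G → N}
    (hu : IsCocycle u) {g : G} (hg : g ^ 3 = 1) {n : N} (hn : n ^ 3 = u g ^ 2 * g • u g) :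
    n⁻¹ * u g * g • n = 1 :=
  hcube <| by
    simp only [pow_three_inv_mul_mul_smul g hn, hu.mul_smul_mul_smul_smul_eq_one hg, one_pow]

theorem pslTau_pow_three : pslTau ^ 3 = 1 := by
  show (QuotientGroup.mk _ : PSL2Z) ^ 3 = 1
  erw [← QuotientGroup.mk_pow, QuotientGroup.eq_one_iff]
  convert (Subgroup.center SL2Z).one_mem
  ext i j
  fin_cases i <;> fin_cases j <;> rfl

theorem cohomologous_to_tau_one {N : Type*} [CommGroup N]
    [MulDistribMulAction PSL2Z N]
    (hcube : Function.Bijective fun n : N => n ^ 3)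
    (u : PSL2Z → N) (hu : IsCocycle u) :
    (∀ a b : N, a ^ 3 = u pslTau ^ 2 → b ^ 3 = pslTau • u pslTau →
      (a * b)⁻¹ * u pslTau * pslTau • (a * b) = 1) ∧
    ∃ v : PSL2Z → N, IsCocycle v ∧ Cohomologous u v ∧ v pslTau = 1 := by
  have key (a b : N) (ha : a ^ 3 = u pslTau ^ 2) (hb : b ^ 3 = pslTau • u pslTau) :
      (a * b)⁻¹ * u pslTau * pslTau • (a * b) = 1 :=
    hu.inv_mul_mul_smul_eq_one hcube.injective pslTau_pow_three (by rw [mul_pow, ha, hb])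
  refine ⟨key, ?_⟩
  obtain ⟨a, ha⟩ := hcube.surjective (u pslTau ^ 2)
  obtain ⟨b, hb⟩ := hcube.surjective (pslTau • u pslTau)
  exact ⟨_, hu.twist (a * b), ⟨a * b, fun _ => rfl⟩, key a b ha hb⟩
end
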